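/- arXiv:2207.04259 — 2 statements merged into one kernel-verified Lean document; each statement's English description precedes it below -/
import Mathlib

section
/- Let n ≥ 3 be an integer, let A be a symmetric real n×n matrix, and let v ∈ ℝⁿ. Set R = tr(A), w = -2Av, and define the 3-tensor D by D_{ijk} = (1/(n-2))·(A_{ik}v_j - A_{jk}v_i) + (1/(2(n-1)(n-2)))·(δ_{jk}(w_i + 2R v_i) - δ_{ik}(w_j + 2R v_j)). Then Σ_{i,j,k} (D_{ijk})² = (2/(n-2)²)·(‖A‖_F²·‖v‖² - ‖Av‖²) - (2/((n-1)(n-2)²))·‖tr(A)·v - Av‖². -/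
/-!
Write `T(A, v)ᵢⱼₖ = Aᵢₖ vⱼ - Aⱼₖ vᵢ` and `u = R v - A v`. Since `w + 2 R v = 2 u`, the tensor is
`D = T(A, v) / (n - 2) - T(1, u) / ((n - 1)(n - 2))`. For each fixed `k` the pairing of two such
tensors is a Binet–Cauchy identity in `(i, j)`, and summing over `k` gives
`⟪T(A, v), T(B, u)⟫ = 2 (⟪A, B⟫ ⟪v, u⟫ - ⟪Aᵀ u, Bᵀ v⟫)`. Hence `‖T(A, v)‖² = 2 (‖A‖² ‖v‖² - ‖A v‖²)`
for symmetric `A`, `⟪T(A, v), T(1, u)⟫ = 2 ‖u‖²` and `‖T(1, u)‖² = 2 (n - 1) ‖u‖²`, so in the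
expansion of `‖D‖²` the coefficient of `‖u‖²` is `(-4 + 2) / ((n - 1)(n - 2)²)`.
-/

open Finset Matrix

variable {ι K : Type*} [Fintype ι] [CommRing K]

theorem sum_sum_cross_mul_cross (a v b u : ι → K) :
    ∑ i, ∑ j, (a i * v j - a j * v i) * (b i * u j - b j * u i)
      = 2 * ((a ⬝ᵥ b) * (v ⬝ᵥ u) - (a ⬝ᵥ u) * (v ⬝ᵥ b)) := by
  let g i j := a i * b i * (v j * u j) - a i * u i * (v j * b j)
  have hswap : ∑ i, ∑ j, g j i = ∑ i, ∑ j, g i j := sum_comm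
  calc ∑ i, ∑ j, (a i * v j - a j * v i) * (b i * u j - b j * u i)
      = ∑ i, ∑ j, (g i j + g j i) :=
        sum_congr rfl fun i _ => sum_congr rfl fun j _ => by ring
    _ = 2 * ∑ i, ∑ j, g i j := by simp only [sum_add_distrib, hswap]; ring
    _ = _ := by simp only [g, sum_sub_distrib, ← mul_sum, ← sum_mul, dotProduct]

theorem sum_sum_sum_mul_sub_mul_sq {α β γ : Type*} [Fintype α] [Fintype β] [Fintype γ]
    (a b : K) (f g : α → β → γ → K) :
    ∑ i, ∑ j, ∑ k, (a * f i j k - b * g i j k) ^ 2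
      = a ^ 2 * ∑ i, ∑ j, ∑ k, f i j k ^ 2 - 2 * a * b * ∑ i, ∑ j, ∑ k, f i j k * g i j k
        + b ^ 2 * ∑ i, ∑ j, ∑ k, g i j k ^ 2 := by
  simp only [mul_sum, ← sum_sub_distrib, ← sum_add_distrib]
  exact sum_congr rfl fun i _ => sum_congr rfl fun j _ => sum_congr rfl fun k _ => by ring

def skewTensor (A : Matrix ι ι K) (v : ι → K) (i j k : ι) : K :=
  A i k * v j - A j k * v i

theorem sum_skewTensor_mul_skewTensor (A B : Matrix ι ι K) (v u : ι → K) :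
    ∑ i, ∑ j, ∑ k, skewTensor A v i j k * skewTensor B u i j k
      = 2 * ((Aᵀ * B).trace * (v ⬝ᵥ u) - (Aᵀ *ᵥ u) ⬝ᵥ (Bᵀ *ᵥ v)) := by
  rw [(sum_congr rfl fun i _ => sum_comm).trans sum_comm]
  calc ∑ k, ∑ i, ∑ j, skewTensor A v i j k * skewTensor B u i j k
      = ∑ k, 2 * ((Aᵀ * B).diag k * (v ⬝ᵥ u) - (Aᵀ *ᵥ u) k * (Bᵀ *ᵥ v) k) := by
        refine sum_congr rfl fun k _ => ?_
        refine (sum_sum_cross_mul_cross (fun i => A i k) v (fun i => B i k) u).trans ?_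
        rw [dotProduct_comm v (fun i => B i k)]
        rfl
    _ = _ := by rw [← mul_sum, sum_sub_distrib, ← sum_mul]; rfl

theorem sum_skewTensor_sq (A : Matrix ι ι K) (v : ι → K) :
    ∑ i, ∑ j, ∑ k, skewTensor A v i j k ^ 2
      = 2 * ((∑ i, ∑ j, A i j ^ 2) * ∑ i, v i ^ 2 - ∑ i, (Aᵀ *ᵥ v) i ^ 2) := by
  simp only [sq, sum_skewTensor_mul_skewTensor, trace, Matrix.diag_apply, mul_apply,
    transpose_apply, dotProduct]
  rw [sum_comm]

variable [DecidableEq ι]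

theorem sum_skewTensor_mul_skewTensor_one (A : Matrix ι ι K) (v u : ι → K) :
    ∑ i, ∑ j, ∑ k, skewTensor A v i j k * skewTensor 1 u i j k
      = 2 * ((A.trace • v - A *ᵥ v) ⬝ᵥ u) := by
  rw [sum_skewTensor_mul_skewTensor, transpose_one, one_mulVec, mul_one, trace_transpose,
    mulVec_transpose, ← dotProduct_mulVec, sub_dotProduct, smul_dotProduct, smul_eq_mul,
    dotProduct_comm u]

theorem sum_skewTensor_one_sq (u : ι → K) :
    ∑ i, ∑ j, ∑ k, skewTensor 1 u i j k ^ 2 = 2 * ((Fintype.card ι - 1) * ∑ i, u i ^ 2) := by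
  simp only [sq, sum_skewTensor_mul_skewTensor, transpose_one, one_mulVec, mul_one, trace_one,
    dotProduct]
  ring

/-- For `n ≥ 3`, a symmetric real `n × n` matrix `A` and a vector `v ∈ ℝⁿ`, setting
`R = tr A`, `w = -2Av`, and
`D i j k = (1/(n-2))·(A i k·v j - A j k·v i)
  + (1/(2(n-1)(n-2)))·(δ j k·(w i + 2R·v i) - δ i k·(w j + 2R·v j))`,
one has
`∑ i j k, (D i j k)² = (2/(n-2)²)·(‖A‖_F²·‖v‖² - ‖Av‖²)
  - (2/((n-1)(n-2)²))·‖tr(A)·v - Av‖²`. -/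
theorem D_tensor_norm_sq (n : ℕ) (hn : 3 ≤ n) (A : Matrix (Fin n) (Fin n) ℝ)
    (hA : A.IsSymm) (v : Fin n → ℝ) :
    let R : ℝ := A.trace
    let w : Fin n → ℝ := fun i => -2 * A.mulVec v i
    let D : Fin n → Fin n → Fin n → ℝ := fun i j k =>
      (1 / ((n : ℝ) - 2)) * (A i k * v j - A j k * v i)
        + (1 / (2 * ((n : ℝ) - 1) * ((n : ℝ) - 2))) *
          ((if j = k then (1 : ℝ) else 0) * (w i + 2 * R * v i)
            - (if i = k then (1 : ℝ) else 0) * (w j + 2 * R * v j))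
    ∑ i, ∑ j, ∑ k, (D i j k) ^ 2
      = (2 / ((n : ℝ) - 2) ^ 2) *
          ((∑ i, ∑ j, (A i j) ^ 2) * (∑ i, (v i) ^ 2) - ∑ i, (A.mulVec v i) ^ 2)
        - (2 / (((n : ℝ) - 1) * ((n : ℝ) - 2) ^ 2)) *
            ∑ i, (A.trace * v i - A.mulVec v i) ^ 2 := by
  intro R w D
  have hn' : (3 : ℝ) ≤ n := by exact_mod_cast hn
  have hn1 : (n : ℝ) - 1 ≠ 0 := by linarith
  have hn2 : (n : ℝ) - 2 ≠ 0 := by linarith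
  set u := A.trace • v - A *ᵥ v with hu
  have hD : ∀ i j k, D i j k = 1 / ((n : ℝ) - 2) * skewTensor A v i j k
      - 1 / (((n : ℝ) - 1) * ((n : ℝ) - 2)) * skewTensor 1 u i j k := by
    intro i j k
    simp only [D, w, R, u, skewTensor, one_apply, Pi.sub_apply, Pi.smul_apply, smul_eq_mul]
    field_simp
    ring
  have hAv : ∑ i, ∑ j, ∑ k, skewTensor A v i j k ^ 2
      = 2 * ((∑ i, ∑ j, A i j ^ 2) * ∑ i, v i ^ 2 - ∑ i, (A *ᵥ v) i ^ 2) := by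
    rw [sum_skewTensor_sq, hA.eq]
  have hAv_u : ∑ i, ∑ j, ∑ k, skewTensor A v i j k * skewTensor 1 u i j k
      = 2 * ∑ i, u i ^ 2 := by
    rw [sum_skewTensor_mul_skewTensor_one, ← hu]
    simp only [dotProduct, sq]
  have hu_sq : ∑ i, u i ^ 2 = ∑ i, (A.trace * v i - A.mulVec v i) ^ 2 := rfl
  simp only [hD]
  rw [sum_sum_sum_mul_sub_mul_sq, hAv, hAv_u, sum_skewTensor_one_sq, Fintype.card_fin, hu_sq]
  field_simp
  ring
end

section
/- Let n ≥ 3 be an integer, let A be a symmetric real n×n matrix, and let v ∈ ℝⁿ. Then ‖A‖_F²·‖v‖² - ‖Av‖² ≥ (1/(n-1))·‖tr(A)·v - Av‖². -/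
/-!
Let `s = v ⬝ᵥ v`, `a = v ⬝ᵥ A v` and `P` the orthogonal projection onto `vᗮ`. The compression
`B = P A P` kills `v`, so `tr B = ⟪B, P⟫_F`, and Cauchy–Schwarz against `P`, whose squared
Frobenius norm is `tr P = n - 1`, gives `(tr B)² ≤ (n - 1) ‖B‖_F²`. Here `tr B = tr A - a / s`
and, `A` being symmetric, `‖B‖_F² = ‖A‖_F² - 2 ‖Av‖² / s + a² / s²`. Multiplied by `s`, the
claim differs from this bound by `(n - 2) (s ‖Av‖² - a²)`, which is nonnegative by
Cauchy–Schwarz for `v` and `Av`.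
-/

open Finset

namespace Matrix

variable {ι R : Type*} [Fintype ι]

theorem trace_transpose_mul_self [NonUnitalNonAssocSemiring R] (A : Matrix ι ι R) :
    trace (Aᵀ * A) = ∑ i, ∑ j, A i j * A i j := by
  rw [trace, Finset.sum_comm]
  simp [mul_apply]

section OrderedRing

variable [CommRing R] [LinearOrder R] [IsStrictOrderedRing R]

theorem dotProduct_sq_le (v w : ι → R) : (v ⬝ᵥ w) ^ 2 ≤ (v ⬝ᵥ v) * (w ⬝ᵥ w) := by
  simpa [dotProduct, sq] using sum_mul_sq_le_sq_mul_sq univ v w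

theorem dotProduct_self_pos {v : ι → R} (hv : v ≠ 0) : 0 < v ⬝ᵥ v :=
  (sum_nonneg fun i _ => mul_self_nonneg (v i)).lt_of_ne
    (Ne.symm (dotProduct_self_eq_zero.not.mpr hv))

theorem trace_mul_sq_le (A B : Matrix ι ι R) :
    trace (A * B) ^ 2 ≤ trace (Aᵀ * A) * trace (Bᵀ * B) := by
  have h := sum_mul_sq_le_sq_mul_sq univ (fun p : ι × ι => A p.1 p.2) (fun p => B p.2 p.1)
  rw [trace_transpose_mul_self, trace_transpose_mul_self,
    Finset.sum_comm (f := fun i j => B i j * B i j)]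
  simpa [trace, mul_apply, Fintype.sum_prod_type, sq] using h

end OrderedRing

section PerpProjScaled

variable [DecidableEq ι] [CommRing R] (v : ι → R)

/-- `(v ⬝ᵥ v)` times the orthogonal projection onto `vᗮ`; the scaling keeps everything
division-free. -/
def perpProjScaled : Matrix ι ι R :=
  (v ⬝ᵥ v) • 1 - vecMulVec v v

theorem transpose_perpProjScaled : (perpProjScaled v)ᵀ = perpProjScaled v := by
  simp [perpProjScaled, transpose_vecMulVec]

theorem perpProjScaled_mulVec_self : perpProjScaled v *ᵥ v = 0 := by
  simp [perpProjScaled, sub_mulVec, vecMulVec_mulVec, smul_mulVec]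

theorem mul_perpProjScaled (A : Matrix ι ι R) :
    A * perpProjScaled v = (v ⬝ᵥ v) • A - vecMulVec (A *ᵥ v) v := by
  simp [perpProjScaled, mul_sub, mul_vecMulVec]

theorem mul_perpProjScaled_of_mulVec_eq_zero {B : Matrix ι ι R} (hB : B *ᵥ v = 0) :
    B * perpProjScaled v = (v ⬝ᵥ v) • B := by
  simp [mul_perpProjScaled, hB]

theorem perpProjScaled_mul_self :
    perpProjScaled v * perpProjScaled v = (v ⬝ᵥ v) • perpProjScaled v :=
  mul_perpProjScaled_of_mulVec_eq_zero v (perpProjScaled_mulVec_self v)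

theorem trace_perpProjScaled :
    trace (perpProjScaled v) = (Fintype.card ι - 1) * (v ⬝ᵥ v) := by
  rw [perpProjScaled, trace_sub, trace_smul, trace_one, trace_vecMulVec, smul_eq_mul]
  ring

theorem trace_mul_perpProjScaled (A : Matrix ι ι R) :
    trace (A * perpProjScaled v) = (v ⬝ᵥ v) * trace A - v ⬝ᵥ A *ᵥ v := by
  simp [mul_perpProjScaled, dotProduct_comm]

theorem trace_mul_perpProjScaled_mul_perpProjScaled {A : Matrix ι ι R} (hA : A.IsSymm) :
    trace (A * perpProjScaled v * A * perpProjScaled v) =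
      (v ⬝ᵥ v) ^ 2 * trace (A * A) - 2 * (v ⬝ᵥ v) * (A *ᵥ v ⬝ᵥ A *ᵥ v)
        + (v ⬝ᵥ A *ᵥ v) ^ 2 := by
  have hvA : v ᵥ* A = A *ᵥ v := by rw [← mulVec_transpose, hA.eq]
  rw [Matrix.mul_assoc _ A, mul_perpProjScaled, sub_mul, mul_sub, mul_sub, trace_sub, trace_sub,
    trace_sub, trace_mul_comm ((v ⬝ᵥ v) • A) (vecMulVec (A *ᵥ v) v)]
  simp only [Matrix.smul_mul, Matrix.mul_smul, trace_smul, vecMulVec_mul, vecMul_vecMulVec,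
    trace_vecMulVec, hvA, dotProduct_smul, smul_eq_mul]
  rw [dotProduct_comm v (A *ᵥ v)]
  ring

theorem trace_perpProjScaled_mul_mul_perpProjScaled (A : Matrix ι ι R) :
    trace (perpProjScaled v * A * perpProjScaled v) =
      (v ⬝ᵥ v) * trace (A * perpProjScaled v) := by
  rw [trace_mul_cycle, perpProjScaled_mul_self, Matrix.smul_mul, trace_smul, smul_eq_mul,
    trace_mul_comm]

theorem trace_mul_self_perpProjScaled_mul_mul_perpProjScaled (A : Matrix ι ι R) :
    trace ((perpProjScaled v * A * perpProjScaled v) * (perpProjScaled v * A * perpProjScaled v)) =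
      (v ⬝ᵥ v) ^ 2 * trace (A * perpProjScaled v * A * perpProjScaled v) := by
  set Q := perpProjScaled v
  calc trace ((Q * A * Q) * (Q * A * Q)) = trace (Q * (A * (Q * Q) * A * Q)) := by
        simp only [Matrix.mul_assoc]
    _ = trace (A * (Q * Q) * A * (Q * Q)) := by
        rw [trace_mul_comm, Matrix.mul_assoc _ Q Q]
    _ = (v ⬝ᵥ v) ^ 2 * trace (A * Q * A * Q) := by
        simp only [Q, perpProjScaled_mul_self, Matrix.mul_smul, Matrix.smul_mul, trace_smul,
          smul_eq_mul]
        ring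

end PerpProjScaled

variable [CommRing R] [LinearOrder R] [IsStrictOrderedRing R]

theorem trace_sq_le_of_mulVec_eq_zero {B : Matrix ι ι R} {v : ι → R} (hv : v ≠ 0)
    (hB : B *ᵥ v = 0) : trace B ^ 2 ≤ (Fintype.card ι - 1) * trace (Bᵀ * B) := by
  classical
  have hs := dotProduct_self_pos hv
  have h := trace_mul_sq_le B (perpProjScaled v)
  rw [mul_perpProjScaled_of_mulVec_eq_zero v hB, transpose_perpProjScaled,
    perpProjScaled_mul_self, trace_smul, trace_smul, trace_perpProjScaled, smul_eq_mul,
    smul_eq_mul] at h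
  refine le_of_mul_le_mul_left ?_ (pow_pos hs 2)
  linarith

theorem dotProduct_self_trace_smul_sub_mulVec_le {A : Matrix ι ι R} (hA : A.IsSymm)
    (hι : 2 ≤ Fintype.card ι) (v : ι → R) :
    (trace A • v - A *ᵥ v) ⬝ᵥ (trace A • v - A *ᵥ v) ≤
      (Fintype.card ι - 1) * (trace (Aᵀ * A) * (v ⬝ᵥ v) - A *ᵥ v ⬝ᵥ A *ᵥ v) := by
  classical
  rcases eq_or_ne v 0 with rfl | hv
  · simp
  set Q := perpProjScaled v
  have hkernel : (Q * A * Q) *ᵥ v = 0 := by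
    rw [← mulVec_mulVec, perpProjScaled_mulVec_self, mulVec_zero]
  have hsymm : (Q * A * Q)ᵀ = Q * A * Q := by
    rw [transpose_mul, transpose_mul, transpose_perpProjScaled, hA.eq, Matrix.mul_assoc]
  have hcompress := trace_sq_le_of_mulVec_eq_zero hv hkernel
  rw [hsymm, trace_perpProjScaled_mul_mul_perpProjScaled,
    trace_mul_self_perpProjScaled_mul_mul_perpProjScaled, trace_mul_perpProjScaled,
    trace_mul_perpProjScaled_mul_perpProjScaled v hA] at hcompress
  have hs := dotProduct_self_pos hv
  have hcard : (2 : R) ≤ Fintype.card ι := by exact_mod_cast hι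
  have hcs := mul_le_mul_of_nonneg_left (dotProduct_sq_le v (A *ᵥ v)) (sub_nonneg.mpr hcard)
  have hexpand : (trace A • v - A *ᵥ v) ⬝ᵥ (trace A • v - A *ᵥ v) =
      trace A ^ 2 * (v ⬝ᵥ v) - 2 * trace A * (v ⬝ᵥ A *ᵥ v) + A *ᵥ v ⬝ᵥ A *ᵥ v := by
    simp only [dotProduct_sub, sub_dotProduct, dotProduct_smul, smul_dotProduct, smul_eq_mul,
      dotProduct_comm (A *ᵥ v) v]
    ring
  have hkey : (v ⬝ᵥ v * trace A - v ⬝ᵥ A *ᵥ v) ^ 2 ≤ (Fintype.card ι - 1) *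
      ((v ⬝ᵥ v) ^ 2 * trace (A * A) - 2 * (v ⬝ᵥ v) * (A *ᵥ v ⬝ᵥ A *ᵥ v)
        + (v ⬝ᵥ A *ᵥ v) ^ 2) :=
    le_of_mul_le_mul_left (by linear_combination hcompress) (pow_pos hs 2)
  rw [hexpand, hA.eq]
  refine le_of_mul_le_mul_left ?_ hs
  linear_combination hkey + hcs

end Matrix

/-- For `n ≥ 3`, a symmetric real `n × n` matrix `A` and a vector `v ∈ ℝⁿ`,
`‖A‖_F²·‖v‖² - ‖Av‖² ≥ (1/(n-1))·‖tr(A)·v - Av‖²`. -/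
theorem frobenius_mulVec_trace_ineq (n : ℕ) (hn : 3 ≤ n) (A : Matrix (Fin n) (Fin n) ℝ)
    (hA : A.IsSymm) (v : Fin n → ℝ) :
    (1 / ((n : ℝ) - 1)) * ∑ i, (A.trace * v i - A.mulVec v i) ^ 2
      ≤ (∑ i, ∑ j, (A i j) ^ 2) * (∑ i, (v i) ^ 2) - ∑ i, (A.mulVec v i) ^ 2 := by
  have hpos : (0 : ℝ) < n - 1 := by
    have : (3 : ℝ) ≤ n := by exact_mod_cast hn
    linarith
  have h := Matrix.dotProduct_self_trace_smul_sub_mulVec_le hA (by rw [Fintype.card_fin]; omega) v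
  simp only [dotProduct, Matrix.trace_transpose_mul_self, Pi.sub_apply, Pi.smul_apply,
    smul_eq_mul, Fintype.card_fin] at h
  rw [one_div, inv_mul_le_iff₀ hpos]
  simpa only [sq] using h
end
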